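/- Let q ≥ 2, n ≥ 1, and let 𝐚 = (A_0, …, A_n) be a quasicode of length n over an alphabet of size q whose support consists exactly of the integers a_1 < a_2 < ⋯ < a_s, and suppose 𝐚 is a (2s−1)-design. Then the function h : {0,1,…,n} → ℝ given by h(x) = (a_1 − x)(a_2 − x)⋯(a_s − x) is positive definite. -/

import Mathlib

/-!
Write `h = ∑_{j ≤ s} e_j K_j` on `{0, …, n}`; this is possible because `K_j` agrees there with a
polynomial of degree `j` and leading coefficient `(-q)^j / j!`, which also gives
`e_s = s! / q^s > 0`. For `j < s`, orthogonality of the `K_j` for the weights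
`w_x = C(n, x) (q - 1)^x` gives `e_j ‖K_j‖² = ∑_x w_x h(x) K_j(x)`. As `h K_j` has degree
`≤ 2s - 1`, the design property turns this weighted sum into `(q^n / N) ∑_x A_x h(x) K_j(x)`,
and since `h` vanishes on the support only the term `x = 0` survives: `(q^n / N) h(0) K_j(0) ≥ 0`.
-/

open Finset

/-- The Krawtchouk polynomial `K_k(x; n, q)` evaluated at a natural number `x`. -/
noncomputable def kraw (n q k x : ℕ) : ℝ :=
  ∑ j ∈ Finset.range (k+1),
    (-1 : ℝ)^j * ((q : ℝ) - 1)^(k-j) * (x.choose j : ℝ) * ((n-x).choose (k-j) : ℝ)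

/-- The finite difference operator `Δf(m) = f(m+1) − f(m)`. -/
def fdiff (f : ℕ → ℝ) : ℕ → ℝ := fun m => f (m+1) - f m

/-- `f` is completely monotonic on `{a, a+1, …, b}`:
`(−1)^k Δ^k f(i) ≥ 0` whenever `k ≥ 0` and `a ≤ i ≤ b − k`. -/
def CompletelyMonotonicOn (f : ℕ → ℝ) (a b : ℕ) : Prop :=
  ∀ k i, a ≤ i → i + k ≤ b → 0 ≤ (-1 : ℝ)^k * (fdiff^[k] f) i

/-- A quasicode of length `n` and size `N` over an alphabet of size `q`,
recorded via its entries `A 0, …, A n`. -/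
structure IsQuasicode (q n : ℕ) (N : ℝ) (A : ℕ → ℝ) : Prop where
  nonneg : ∀ i, i ≤ n → 0 ≤ A i
  delsarte : ∀ j, j ≤ n → 0 ≤ ∑ i ∈ Finset.range (n+1), A i * kraw n q j i
  size : ∑ i ∈ Finset.range (n+1), A i = N
  zeroth : A 0 = 1

/-- A universally optimal quasicode: a quasicode that minimizes `f`-energy
among all quasicodes of the same length and size, for every completely
monotonic potential function `f`. -/
def IsUOQuasicode (q n : ℕ) (N : ℝ) (A : ℕ → ℝ) : Prop :=
  IsQuasicode q n N A ∧
    ∀ f : ℕ → ℝ, CompletelyMonotonicOn f 0 n →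
      ∀ B : ℕ → ℝ, IsQuasicode q n N B →
        ∑ i ∈ Finset.range (n+1), f i * A i ≤ ∑ i ∈ Finset.range (n+1), f i * B i

/-- The quasicode `A` (of size `N`) is a `t`-design: `A^⊥_j = 0` for `1 ≤ j ≤ t`. -/
def IsDesign (q n t : ℕ) (A : ℕ → ℝ) : Prop :=
  ∀ j, 1 ≤ j → j ≤ t → ∑ i ∈ Finset.range (n+1), A i * kraw n q j i = 0

/-- `h : {0,…,n} → ℝ` is positive definite: its (unique) Krawtchouk
coefficients are all nonnegative. -/
def PositiveDefinite (q n : ℕ) (h : ℕ → ℝ) : Prop :=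
  ∃ c : ℕ → ℝ, (∀ j, j ≤ n → 0 ≤ c j) ∧
    ∀ i, i ≤ n → h i = ∑ j ∈ Finset.range (n+1), c j * kraw n q j i

open scoped Classical in
/-- The support of a quasicode: `{i > 0 : A i ≠ 0}`. -/
noncomputable def supp (n : ℕ) (A : ℕ → ℝ) : Finset ℕ :=
  (Finset.Icc 1 n).filter (fun i => A i ≠ 0)

open Polynomial
open scoped Nat

section ProdCSubX

variable {R ι : Type*} [CommRing R] (s : Finset ι) (f : ι → R)

lemma prod_C_sub_X_eq : ∏ i ∈ s, (C (f i) - X) = C ((-1) ^ #s) * ∏ i ∈ s, (X - C (f i)) := by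
  simp_rw [← neg_sub X, Finset.prod_neg, map_pow, map_neg, map_one]

lemma natDegree_prod_C_sub_X_le [Nontrivial R] : (∏ i ∈ s, (C (f i) - X)).natDegree ≤ #s := by
  rw [prod_C_sub_X_eq]
  exact (natDegree_C_mul_le _ _).trans (natDegree_finsetProd_X_sub_C_eq_card s f).le

lemma coeff_prod_C_sub_X_card [Nontrivial R] :
    (∏ i ∈ s, (C (f i) - X)).coeff #s = (-1) ^ #s := by
  rw [prod_C_sub_X_eq, coeff_C_mul, ← natDegree_finsetProd_X_sub_C_eq_card s f,
    (monic_prod_X_sub_C f s).coeff_natDegree, mul_one]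

end ProdCSubX

lemma coeff_one_add_C_mul_X_pow {R : Type*} [CommRing R] (r : R) (m k : ℕ) :
    ((1 + C r * X) ^ m).coeff k = m.choose k * r ^ k := by
  have hterm (i : ℕ) : (C r * X) ^ i * 1 ^ (m - i) * (m.choose i : R[X]) =
      C (m.choose i * r ^ i) * X ^ i := by
    rw [one_pow, mul_one, mul_pow, ← C_pow, ← map_natCast C, C_mul]; ring
  simp_rw [add_comm (1 : R[X]), add_pow, hterm, finsetSum_coeff, coeff_C_mul_X_pow,
    Finset.sum_ite_eq, Finset.mem_range]
  split_ifs with hk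
  · rfl
  · rw [Nat.choose_eq_zero_of_lt (by omega), Nat.cast_zero, zero_mul]

noncomputable def choosePoly (k : ℕ) : ℝ[X] := C (k ! : ℝ)⁻¹ * descPochhammer ℝ k

lemma eval_choosePoly (k m : ℕ) : (choosePoly k).eval (m : ℝ) = m.choose k := by
  rw [choosePoly, eval_C_mul, descPochhammer_eval_eq_descFactorial,
    Nat.descFactorial_eq_factorial_mul_choose]
  push_cast
  field_simp

lemma natDegree_choosePoly (k : ℕ) : (choosePoly k).natDegree = k := by
  rw [choosePoly, natDegree_C_mul (by positivity), descPochhammer_natDegree]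

lemma coeff_choosePoly_self (k : ℕ) : (choosePoly k).coeff k = (k ! : ℝ)⁻¹ := by
  have := (monic_descPochhammer ℝ k).coeff_natDegree
  rw [descPochhammer_natDegree] at this
  rw [choosePoly, coeff_C_mul, this, mul_one]

lemma natDegree_C_sub_X {R : Type*} [Ring R] [Nontrivial R] (r : R) :
    (C r - X).natDegree = 1 := by
  rw [natDegree_sub_eq_right_of_natDegree_lt] <;> simp

lemma leadingCoeff_C_sub_X {R : Type*} [Ring R] [Nontrivial R] (r : R) :
    (C r - X).leadingCoeff = -1 := by
  rw [leadingCoeff_sub_of_degree_lt'] <;> simp [degree_C_lt]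

lemma eval_choosePoly_comp {n x : ℕ} (k : ℕ) (hx : x ≤ n) :
    ((choosePoly k).comp (C (n : ℝ) - X)).eval (x : ℝ) = (n - x).choose k := by
  rw [eval_comp, eval_sub, eval_C, eval_X, ← Nat.cast_sub hx, eval_choosePoly]

lemma natDegree_choosePoly_comp_le (n k : ℕ) :
    ((choosePoly k).comp (C (n : ℝ) - X)).natDegree ≤ k := by
  have := natDegree_comp_le (p := choosePoly k) (q := C (n : ℝ) - X)
  rwa [natDegree_choosePoly, natDegree_C_sub_X, mul_one] at this

lemma coeff_choosePoly_comp (n k : ℕ) :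
    ((choosePoly k).comp (C (n : ℝ) - X)).coeff k = (-1) ^ k * (k ! : ℝ)⁻¹ := by
  have := coeff_comp_degree_mul_degree (p := choosePoly k) (q := C (n : ℝ) - X) (by
    rw [natDegree_C_sub_X]; exact one_ne_zero)
  rw [natDegree_C_sub_X, leadingCoeff, natDegree_choosePoly, mul_one, coeff_choosePoly_self,
    leadingCoeff_C_sub_X] at this
  rw [this, mul_comm]

noncomputable def krawPoly (n q k : ℕ) : ℝ[X] :=
  ∑ j ∈ range (k + 1), C ((-1) ^ j * ((q : ℝ) - 1) ^ (k - j)) *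
    (choosePoly j * (choosePoly (k - j)).comp (C (n : ℝ) - X))

lemma eval_krawPoly {n x : ℕ} (q k : ℕ) (hx : x ≤ n) :
    (krawPoly n q k).eval (x : ℝ) = kraw n q k x := by
  simp only [krawPoly, kraw, eval_finsetSum, eval_mul, eval_C, eval_choosePoly,
    eval_choosePoly_comp _ hx, mul_assoc]

lemma natDegree_krawPoly_le (n q k : ℕ) : (krawPoly n q k).natDegree ≤ k := by
  refine natDegree_sum_le_of_forall_le _ _ fun j hj => (natDegree_C_mul_le _ _).trans ?_
  have := natDegree_choosePoly_comp_le n (k - j)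
  rw [Finset.mem_range] at hj
  exact natDegree_mul_le.trans (by rw [natDegree_choosePoly]; omega)

lemma coeff_krawPoly_mul_factorial (n q k : ℕ) :
    (krawPoly n q k).coeff k * k ! = (-(q : ℝ)) ^ k := by
  have hterm : ∀ j ∈ range (k + 1), (C ((-1) ^ j * ((q : ℝ) - 1) ^ (k - j)) *
      (choosePoly j * (choosePoly (k - j)).comp (C (n : ℝ) - X))).coeff k * k ! =
      (-1) ^ k * (1 ^ j * ((q : ℝ) - 1) ^ (k - j) * k.choose j) := by
    intro j hj
    rw [Finset.mem_range] at hj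
    have hcoeff := coeff_mul_add_eq_of_natDegree_le (natDegree_choosePoly j).le
      (natDegree_choosePoly_comp_le n (k - j))
    rw [Nat.add_sub_of_le (by omega)] at hcoeff
    rw [coeff_C_mul, hcoeff, coeff_choosePoly_self, coeff_choosePoly_comp,
      Nat.cast_choose ℝ (by omega : j ≤ k), ← (pow_mul_pow_sub (-1 : ℝ) (by omega : j ≤ k))]
    field_simp
    ring
  rw [krawPoly, finsetSum_coeff, Finset.sum_mul, Finset.sum_congr rfl hterm, ← Finset.mul_sum,
    ← add_pow, neg_pow]
  ring

lemma kraw_zero_left (n q x : ℕ) : kraw n q 0 x = 1 := by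
  simp [kraw]

lemma kraw_zero_right (n q k : ℕ) : kraw n q k 0 = ((q : ℝ) - 1) ^ k * n.choose k := by
  rw [kraw, Finset.sum_eq_single 0 (fun j _ hj => by simp [Nat.choose_eq_zero_of_lt
    (Nat.pos_of_ne_zero hj)]) (by simp)]
  simp

lemma kraw_eq_zero_of_lt {n x k : ℕ} (q : ℕ) (hx : x ≤ n) (hk : n < k) : kraw n q k x = 0 := by
  refine Finset.sum_eq_zero fun j _ => ?_
  rcases le_or_gt j x with hj | hj
  · rw [Nat.choose_eq_zero_of_lt (by omega : n - x < k - j)]; simp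
  · rw [Nat.choose_eq_zero_of_lt hj]; simp

lemma kraw_eq_coeff (n q k x : ℕ) :
    kraw n q k x = ((1 - X) ^ x * (1 + C ((q : ℝ) - 1) * X) ^ (n - x)).coeff k := by
  rw [show (1 - X : ℝ[X]) = 1 + C (-1) * X by rw [C_neg, C_1]; ring, coeff_mul,
    Finset.Nat.sum_antidiagonal_eq_sum_range_succ_mk, kraw]
  refine Finset.sum_congr rfl fun j _ => ?_
  rw [coeff_one_add_C_mul_X_pow, coeff_one_add_C_mul_X_pow]
  ring

theorem exists_kraw_expansion (n : ℕ) {q : ℕ} (hq : q ≠ 0) {d : ℕ} {p : ℝ[X]}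
    (hp : p.natDegree ≤ d) :
    ∃ c : ℕ → ℝ, c d * (-(q : ℝ)) ^ d = d ! * p.coeff d ∧
      ∀ x ≤ n, p.eval (x : ℝ) = ∑ j ∈ range (d + 1), c j * kraw n q j x := by
  induction d generalizing p with
  | zero =>
    refine ⟨fun _ => p.coeff 0, by simp, fun x _ => ?_⟩
    rw [eq_C_of_natDegree_eq_zero (Nat.le_zero.mp hp)]
    simp [kraw_zero_left]
  | succ d ih =>
    have hqd : (-(q : ℝ)) ^ (d + 1) ≠ 0 := by simp [hq]
    set t : ℝ := (d + 1)! * p.coeff (d + 1) / (-(q : ℝ)) ^ (d + 1)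
    have hlow : (p - C t * krawPoly n q (d + 1)).natDegree ≤ d := by
      refine natDegree_le_iff_coeff_eq_zero.mpr fun m hm => ?_
      rcases Nat.lt_or_ge (d + 1) m with hm | hm
      · rw [coeff_sub, coeff_C_mul, coeff_eq_zero_of_natDegree_lt (hp.trans_lt hm),
          coeff_eq_zero_of_natDegree_lt ((natDegree_krawPoly_le n q (d + 1)).trans_lt hm),
          mul_zero, sub_zero]
      · obtain rfl : m = d + 1 := by omega
        have hcancel : t * (krawPoly n q (d + 1)).coeff (d + 1) = p.coeff (d + 1) := by
          rw [div_mul_eq_mul_div, div_eq_iff hqd, ← coeff_krawPoly_mul_factorial]; ring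
        rw [coeff_sub, coeff_C_mul, hcancel, sub_self]
    obtain ⟨c, -, hc⟩ := ih hlow
    refine ⟨Function.update c (d + 1) t, by simp [t, hqd], fun x hx => ?_⟩
    have hsplit : p.eval (x : ℝ) = (p - C t * krawPoly n q (d + 1)).eval (x : ℝ) +
        t * kraw n q (d + 1) x := by
      rw [eval_sub, eval_C_mul, eval_krawPoly q _ hx]; ring
    rw [hsplit, hc x hx, Finset.sum_range_succ _ (d + 1), Function.update_self]
    congr 1
    refine Finset.sum_congr rfl fun j hj => ?_
    rw [Function.update_of_ne (Finset.mem_range.mp hj).ne]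

/-- `G x` is the generating function of `k ↦ kraw n q k x`; summing `G x (y) G x (z)` against the
weights collapses, by the binomial theorem, to `(q (1 + (q - 1) y z)) ^ n`. -/
theorem sum_choose_mul_kraw_mul_kraw (n q i j : ℕ) :
    ∑ x ∈ range (n + 1), n.choose x * ((q : ℝ) - 1) ^ x * (kraw n q i x * kraw n q j x) =
      if i = j then (q : ℝ) ^ n * ((q : ℝ) - 1) ^ i * n.choose i else 0 := by
  set G : ℕ → ℝ[X] := fun x => (1 - X) ^ x * (1 + C ((q : ℝ) - 1) * X) ^ (n - x)
  have hgen : ∑ x ∈ range (n + 1),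
      C (C (n.choose x * ((q : ℝ) - 1) ^ x)) * (map C (G x) * C (G x)) =
      C (C ((q : ℝ) ^ n)) * (1 + C (C ((q : ℝ) - 1) * X) * X) ^ n := by
    have hsum : C (C ((q : ℝ) - 1)) * (1 - X) * C (1 - X) +
        (1 + C (C ((q : ℝ) - 1)) * X) * C (1 + C ((q : ℝ) - 1) * X) =
        C (C (q : ℝ)) * (1 + C (C ((q : ℝ) - 1) * X) * X) := by
      simp only [map_mul, map_sub, map_add, map_one, map_natCast]; ring
    rw [map_pow, map_pow, ← mul_pow, ← hsum, add_pow]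
    refine Finset.sum_congr rfl fun x _ => ?_
    have hmap : map C (G x) = (1 - X) ^ x * (1 + C (C ((q : ℝ) - 1)) * X) ^ (n - x) := by
      simp [G]
    rw [hmap]
    simp only [G, map_mul, map_pow, map_natCast, mul_pow]
    ring
  have hcoeff := congrArg (fun P : ℝ[X][X] => (P.coeff i).coeff j) hgen
  simp only [finsetSum_coeff, coeff_C_mul, coeff_mul_C, coeff_map, coeff_one_add_C_mul_X_pow,
    mul_pow, ← C_pow, G, ← kraw_eq_coeff] at hcoeff
  rw [hcoeff, ← map_natCast C, ← mul_assoc, ← C_mul, coeff_C_mul_X_pow]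
  rcases eq_or_ne i j with rfl | hij
  · simp only [if_true]; ring
  · simp only [hij, hij.symm, if_false, mul_zero]

theorem sum_choose_mul_kraw_of_expansion {n q d j : ℕ} {f c : ℕ → ℝ}
    (hf : ∀ x ≤ n, f x = ∑ m ∈ range (d + 1), c m * kraw n q m x) (hj : j ≤ d) :
    ∑ x ∈ range (n + 1), n.choose x * ((q : ℝ) - 1) ^ x * (f x * kraw n q j x) =
      c j * ((q : ℝ) ^ n * ((q : ℝ) - 1) ^ j * n.choose j) := by
  calc ∑ x ∈ range (n + 1), n.choose x * ((q : ℝ) - 1) ^ x * (f x * kraw n q j x)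
      = ∑ m ∈ range (d + 1), c m *
          ∑ x ∈ range (n + 1), n.choose x * ((q : ℝ) - 1) ^ x * (kraw n q m x * kraw n q j x) := by
        simp_rw [Finset.mul_sum]
        rw [Finset.sum_comm]
        refine Finset.sum_congr rfl fun x hx => ?_
        rw [hf x (Finset.mem_range_succ_iff.mp hx), Finset.sum_mul, Finset.mul_sum]
        refine Finset.sum_congr rfl fun m _ => ?_
        ring
    _ = c j * ((q : ℝ) ^ n * ((q : ℝ) - 1) ^ j * n.choose j) := by
        simp_rw [sum_choose_mul_kraw_mul_kraw, mul_ite, mul_zero]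
        rw [Finset.sum_ite_eq', if_pos (Finset.mem_range.mpr (by omega))]

namespace IsDesign

variable {q n t : ℕ} {A : ℕ → ℝ}

theorem sum_mul_of_expansion (hA : IsDesign q n t A) {d : ℕ} (hd : d ≤ t) {f c : ℕ → ℝ}
    (hf : ∀ x ≤ n, f x = ∑ m ∈ range (d + 1), c m * kraw n q m x) :
    ∑ x ∈ range (n + 1), A x * f x = c 0 * ∑ x ∈ range (n + 1), A x := by
  calc ∑ x ∈ range (n + 1), A x * f x
      = ∑ m ∈ range (d + 1), c m * ∑ x ∈ range (n + 1), A x * kraw n q m x := by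
        simp_rw [Finset.mul_sum]
        rw [Finset.sum_comm]
        refine Finset.sum_congr rfl fun x hx => ?_
        rw [hf x (Finset.mem_range_succ_iff.mp hx), Finset.mul_sum]
        refine Finset.sum_congr rfl fun m _ => ?_
        ring
    _ = c 0 * ∑ x ∈ range (n + 1), A x := by
        rw [Finset.sum_eq_single 0 (fun m hm hm0 => by
          rw [hA m (Nat.pos_of_ne_zero hm0) ((Finset.mem_range_succ_iff.mp hm).trans hd),
            mul_zero]) (by simp)]
        simp [kraw_zero_left]

theorem quadrature (hA : IsDesign q n t A) (hq : q ≠ 0) {p : ℝ[X]} (hp : p.natDegree ≤ t) :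
    (q : ℝ) ^ n * ∑ x ∈ range (n + 1), A x * p.eval (x : ℝ) =
      (∑ x ∈ range (n + 1), A x) *
        ∑ x ∈ range (n + 1), n.choose x * ((q : ℝ) - 1) ^ x * p.eval (x : ℝ) := by
  obtain ⟨c, -, hc⟩ := exists_kraw_expansion n hq hp
  have hweight := sum_choose_mul_kraw_of_expansion hc (Nat.zero_le t)
  simp only [kraw_zero_left, mul_one, pow_zero, Nat.choose_zero_right, Nat.cast_one] at hweight
  rw [hA.sum_mul_of_expansion le_rfl hc, hweight]
  ring

end IsDesign

lemma sum_mul_eq_of_eq_zero_on_supp {n : ℕ} {A g : ℕ → ℝ} (hA0 : A 0 = 1)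
    (hg : ∀ x ∈ supp n A, g x = 0) : ∑ x ∈ range (n + 1), A x * g x = g 0 := by
  rw [Finset.sum_eq_single 0 (fun x hx hx0 => ?_) (by simp), hA0, one_mul]
  by_cases hAx : A x = 0
  · rw [hAx, zero_mul]
  · have hx : x ∈ supp n A := by
      simp only [supp, Finset.mem_filter, Finset.mem_Icc, Finset.mem_range] at hx ⊢
      exact ⟨⟨Nat.pos_of_ne_zero hx0, by omega⟩, hAx⟩
    rw [hg x hx, mul_zero]

namespace IsQuasicode

variable {q n : ℕ} {N : ℝ} {A : ℕ → ℝ}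

theorem one_le_size (hA : IsQuasicode q n N A) : 1 ≤ N := by
  rw [← hA.size, ← hA.zeroth]
  exact Finset.single_le_sum (fun i hi => hA.nonneg i (Finset.mem_range_succ_iff.mp hi)) (by simp)

theorem sum_choose_mul_eval_mul_kraw_nonneg (hA : IsQuasicode q n N A) {t : ℕ}
    (hdes : IsDesign q n t A) (hq : q ≠ 0) {p : ℝ[X]} {j : ℕ} (hpj : p.natDegree + j ≤ t)
    (hvan : ∀ x ∈ supp n A, p.eval (x : ℝ) = 0) (hp0 : 0 ≤ p.eval 0) :
    0 ≤ ∑ x ∈ range (n + 1), n.choose x * ((q : ℝ) - 1) ^ x * (p.eval (x : ℝ) * kraw n q j x) := by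
  have hdeg : (p * krawPoly n q j).natDegree ≤ t :=
    natDegree_mul_le.trans (by linarith [natDegree_krawPoly_le n q j])
  have hcode : ∑ x ∈ range (n + 1), A x * (p * krawPoly n q j).eval (x : ℝ) =
      p.eval 0 * kraw n q j 0 := by
    rw [sum_mul_eq_of_eq_zero_on_supp hA.zeroth (g := fun x => (p * krawPoly n q j).eval (x : ℝ))
      (fun x hx => by simp [hvan x hx]), eval_mul, eval_krawPoly q j (Nat.zero_le n), Nat.cast_zero]
  have hweight : ∑ x ∈ range (n + 1), n.choose x * ((q : ℝ) - 1) ^ x *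
      (p * krawPoly n q j).eval (x : ℝ) =
      ∑ x ∈ range (n + 1), n.choose x * ((q : ℝ) - 1) ^ x * (p.eval (x : ℝ) * kraw n q j x) :=
    Finset.sum_congr rfl fun x hx => by
      rw [eval_mul, eval_krawPoly q j (Finset.mem_range_succ_iff.mp hx)]
  have hquad := hdes.quadrature hq hdeg
  rw [hcode, hweight, hA.size] at hquad
  have hq1 : (0 : ℝ) ≤ q - 1 :=
    sub_nonneg.mpr (Nat.one_le_cast.mpr (Nat.one_le_iff_ne_zero.mpr hq))
  have hprod : 0 ≤ N * ∑ x ∈ range (n + 1),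
      n.choose x * ((q : ℝ) - 1) ^ x * (p.eval (x : ℝ) * kraw n q j x) := by
    rw [← hquad, kraw_zero_right]
    positivity
  exact nonneg_of_mul_nonneg_right hprod (by linarith [hA.one_le_size])

theorem expansion_coeff_nonneg (hA : IsQuasicode q n N A) {t : ℕ} (hdes : IsDesign q n t A)
    (hq : 2 ≤ q) {p : ℝ[X]} {d : ℕ} {c : ℕ → ℝ}
    (hc : ∀ x ≤ n, p.eval (x : ℝ) = ∑ m ∈ range (d + 1), c m * kraw n q m x)
    (hvan : ∀ x ∈ supp n A, p.eval (x : ℝ) = 0) (hp0 : 0 ≤ p.eval 0) {j : ℕ} (hjd : j ≤ d)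
    (hjn : j ≤ n) (hpj : p.natDegree + j ≤ t) : 0 ≤ c j := by
  have hinner := hA.sum_choose_mul_eval_mul_kraw_nonneg hdes (by omega) hpj hvan hp0
  rw [sum_choose_mul_kraw_of_expansion hc hjd] at hinner
  have hq1 : (1 : ℝ) ≤ q - 1 := by
    have : (2 : ℝ) ≤ q := by exact_mod_cast hq
    linarith
  have hchoose : (0 : ℝ) < n.choose j := by exact_mod_cast Nat.choose_pos hjn
  exact nonneg_of_mul_nonneg_left hinner (by positivity)

end IsQuasicode

theorem positiveDefinite_of_expansion {q n d : ℕ} {f e : ℕ → ℝ} (he : ∀ j ≤ d, j ≤ n → 0 ≤ e j)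
    (hf : ∀ x ≤ n, f x = ∑ j ∈ range (d + 1), e j * kraw n q j x) : PositiveDefinite q n f := by
  refine ⟨fun j => if j ≤ d then e j else 0, fun j hj => ?_, fun x hx => ?_⟩
  · dsimp only
    split_ifs with hjd
    exacts [he j hjd hj, le_rfl]
  · rw [hf x hx, ← Finset.sum_filter_of_ne (p := (· ≤ n)) fun j _ hj => ?_]
    · simp only [ite_mul, zero_mul]
      rw [← Finset.sum_filter]
      refine Finset.sum_congr (Finset.ext fun j => ?_) fun _ _ => rfl
      simp only [Finset.mem_filter, Finset.mem_range]
      omega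
    · by_contra hjn
      exact hj (by rw [kraw_eq_zero_of_lt q hx (not_le.mp hjn), mul_zero])

theorem design_annihilator_positiveDefinite_general {q n s : ℕ} (hq : 2 ≤ q)
    {N : ℝ} {A : ℕ → ℝ} (hA : IsQuasicode q n N A)
    (a : ℕ → ℕ)
    (hsupp : supp n A = (Finset.range s).image a)
    (hdesign : IsDesign q n (2*s-1) A) :
    PositiveDefinite q n (fun x => ∏ i ∈ Finset.range s, ((a i : ℝ) - (x : ℝ))) := by
  set P : ℝ[X] := ∏ i ∈ range s, (C (a i : ℝ) - X)
  have hPeval (x : ℕ) : P.eval (x : ℝ) = ∏ i ∈ range s, ((a i : ℝ) - x) := by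
    simp [P, eval_prod]
  have hPdeg : P.natDegree ≤ s := (natDegree_prod_C_sub_X_le (range s) _).trans_eq (card_range s)
  obtain ⟨e, hlead, hexp⟩ := exists_kraw_expansion n (by omega : q ≠ 0) hPdeg
  refine positiveDefinite_of_expansion (fun j hjs hjn => ?_) fun x hx =>
    (hPeval x).symm.trans (hexp x hx)
  rcases hjs.lt_or_eq with hjs | rfl
  · have hvan (x : ℕ) (hx : x ∈ supp n A) : P.eval (x : ℝ) = 0 := by
      obtain ⟨i, hi, rfl⟩ := Finset.mem_image.mp (hsupp ▸ hx)
      exact (hPeval _).trans (Finset.prod_eq_zero hi (sub_self _))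
    have hP0 : 0 ≤ P.eval 0 := by
      simp only [P, eval_prod, eval_sub, eval_C, eval_X, sub_zero]
      positivity
    exact hA.expansion_coeff_nonneg hdesign hq hexp hvan hP0 hjs.le hjn (by omega)
  · have hPlead : P.coeff j = (-1) ^ j := card_range j ▸ coeff_prod_C_sub_X_card (range j) _
    rw [hPlead, neg_pow, mul_left_comm, mul_comm (j ! : ℝ)] at hlead
    have hej : e j * (q : ℝ) ^ j = j ! := mul_left_cancel₀ (by simp) hlead
    have hqpos : (0 : ℝ) < q := by exact_mod_cast (by omega : 0 < q)
    exact nonneg_of_mul_nonneg_left (by rw [hej]; positivity) (pow_pos hqpos j)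

/-- Lemma 4.5: if a quasicode has support exactly
`a_1 < a_2 < ⋯ < a_s` (zero-indexed: `a 0 < ⋯ < a (s-1)`) and is a
`(2s−1)`-design, then `h(x) = (a_1 − x)⋯(a_s − x)` is positive definite. -/
theorem design_annihilator_positiveDefinite {q n s : ℕ} (hq : 2 ≤ q) (hn : 1 ≤ n)
    {N : ℝ} {A : ℕ → ℝ} (hA : IsQuasicode q n N A)
    (a : ℕ → ℕ) (hmono : ∀ i, i + 1 < s → a i < a (i+1))
    (hsupp : supp n A = (Finset.range s).image a)
    (hdesign : IsDesign q n (2*s-1) A) :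
    PositiveDefinite q n (fun x => ∏ i ∈ Finset.range s, ((a i : ℝ) - (x : ℝ))) :=
  design_annihilator_positiveDefinite_general hq hA a hsupp hdesign
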